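/- arXiv:2401.15353 — 2 statements merged into one kernel-verified Lean document; each statement's English description precedes it below -/
import Mathlib

section
/- The unitary U_α has propagation at most 1 with respect to the graph: for all (x,e) and (y,e') in X × E, if the inner product ⟨δ_{(y,e')}, U_α δ_{(x,e)}⟩ is nonzero, then either y = x, or there exists an edge f ∈ E with s(f) = x and t(f) = y. (This is the finite-propagation part of the lemma asserting that U_γ − 1 lies in the Roe algebra C*(X): the matrix entry (U_γ)_{yx} vanishes whenever x and y are distinct and not adjacent in the graph.) -/
theorem lp.eq_of_inner_single_one_ne_zero {ι 𝕜 : Type*} [RCLike 𝕜] [DecidableEq ι] {i j : ι}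
    (h : inner 𝕜 (lp.single (E := fun _ : ι => 𝕜) 2 i 1) (lp.single 2 j 1) ≠ 0) : i = j := by
  rw [lp.inner_single_left, lp.single_apply] at h
  by_contra hij
  simp [Ne.symm hij] at h

theorem flow_map_fst_eq_or_adj {X E : Type*} (s t : E → X)
    (α : ∀ x : X, {e : E // t e = x} ≃ {e : E // s e = x}) (F : X × E → X × E)
    (hF₁ : ∀ (x : X) (e : E) (h : t e = x),
      F (x, e) = (t ((α x ⟨e, h⟩ : E)), ((α x ⟨e, h⟩ : E))))
    (hF₂ : ∀ (x : X) (e : E), t e ≠ x → F (x, e) = (x, e)) (x : X) (e : E) :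
    (F (x, e)).1 = x ∨ ∃ f : E, s f = x ∧ t f = (F (x, e)).1 := by
  by_cases h : t e = x
  · exact Or.inr ⟨α x ⟨e, h⟩, (α x ⟨e, h⟩).2, by rw [hF₁ x e h]⟩
  · exact Or.inl (by rw [hF₂ x e h])

theorem unitary_of_flow_map_propagation_general {X E : Type*}
    [DecidableEq X] [DecidableEq E]
    (s t : E → X)
    (α : ∀ x : X, {e : E // t e = x} ≃ {e : E // s e = x})
    (F : X × E → X × E)
    (hF₁ : ∀ (x : X) (e : E) (h : t e = x),
      F (x, e) = (t ((α x ⟨e, h⟩ : E)), ((α x ⟨e, h⟩ : E))))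
    (hF₂ : ∀ (x : X) (e : E), t e ≠ x → F (x, e) = (x, e))
    (U : lp (fun _ : X × E => ℂ) 2 ≃ₗᵢ[ℂ] lp (fun _ : X × E => ℂ) 2)
    (hU : ∀ p : X × E, U (lp.single 2 p (1 : ℂ)) = lp.single 2 (F p) (1 : ℂ)) :
    ∀ (x y : X) (e e' : E),
      (inner ℂ (lp.single 2 (y, e') (1 : ℂ)) (U (lp.single 2 (x, e) (1 : ℂ))) : ℂ) ≠ 0 →
      y = x ∨ ∃ f : E, s f = x ∧ t f = y := by
  intro x y e e' hne
  rw [hU] at hne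
  have hF : (y, e') = F (x, e) := lp.eq_of_inner_single_one_ne_zero hne
  simpa only [← hF] using flow_map_fst_eq_or_adj s t α F hF₁ hF₂ x e

/-- The unitary `U` implementing the flow map `F` on `ℓ²(X × E)` has
propagation at most `1` with respect to the graph: for all `(x, e)` and `(y, e')` in
`X × E`, if the inner product `⟪δ_(y,e'), U δ_(x,e)⟫` is nonzero, then either `y = x`,
or there exists an edge `f ∈ E` with `s f = x` and `t f = y`. -/
theorem unitary_of_flow_map_propagation {X E : Type*} [Countable X] [Countable E]
    [DecidableEq X] [DecidableEq E]
    (s t : E → X)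
    (α : ∀ x : X, {e : E // t e = x} ≃ {e : E // s e = x})
    (F : X × E → X × E)
    (hF₁ : ∀ (x : X) (e : E) (h : t e = x),
      F (x, e) = (t ((α x ⟨e, h⟩ : E)), ((α x ⟨e, h⟩ : E))))
    (hF₂ : ∀ (x : X) (e : E), t e ≠ x → F (x, e) = (x, e))
    (U : lp (fun _ : X × E => ℂ) 2 ≃ₗᵢ[ℂ] lp (fun _ : X × E => ℂ) 2)
    (hU : ∀ p : X × E, U (lp.single 2 p (1 : ℂ)) = lp.single 2 (F p) (1 : ℂ)) :
    ∀ (x y : X) (e e' : E),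
      (inner ℂ (lp.single 2 (y, e') (1 : ℂ)) (U (lp.single 2 (x, e) (1 : ℂ))) : ℂ) ≠ 0 →
      y = x ∨ ∃ f : E, s f = x ∧ t f = y :=
  unitary_of_flow_map_propagation_general s t α F hF₁ hF₂ U hU
end

section
/- Assume that I(x) is finite for every vertex x (the graph is locally finite for incoming edges). Then for every finitely supported function f : X → ℂ, the operators (U_α − 1)∘M_f and M_f∘(U_α − 1) on ℓ²(X × E) have finite rank (hence are compact), where M_f is the bounded multiplication operator (M_f φ)(x,e) = f(x)·φ(x,e). (This expresses that U_γ − 1 is a locally compact operator, completing the proof that U_γ − 1 lies in the Roe algebra C*(X).) -/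
/-!
The flow map `F` is a permutation of `X × E` that moves only pairs `(x, e)` with `t e = x`, and
`U` acts on `ℓ²` by `(U φ) q = φ (F⁻¹ q)`. Hence `(U - 1) M_f` and `M_f (U - 1)` take values
supported in `K ∪ F K`, where `K` is the (finite, by local finiteness of incoming edges) set of
moved pairs `(x, e)` with `f x ≠ 0`; so both operators factor through a finite-dimensional space.
-/

open Function
open scoped ENNReal

theorem ContinuousLinearMap.isCompactOperator_of_finiteDimensional_range {𝕜 E F : Type*}
    [NontriviallyNormedField 𝕜] [LocallyCompactSpace 𝕜] [NormedAddCommGroup E] [NormedSpace 𝕜 E]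
    [NormedAddCommGroup F] [NormedSpace 𝕜 F] (T : E →L[𝕜] F)
    [FiniteDimensional 𝕜 (LinearMap.range (T : E →ₗ[𝕜] F))] : IsCompactOperator T := by
  have : ProperSpace (LinearMap.range (T : E →ₗ[𝕜] F)) := FiniteDimensional.proper 𝕜 _
  exact (isCompactOperator_of_locallyCompactSpace_dom T.rangeRestrict).clm_comp
    (LinearMap.range (T : E →ₗ[𝕜] F)).subtypeL

namespace lp

variable {𝕜 ι : Type*} [NormedField 𝕜] {p : ℝ≥0∞}

variable (𝕜 p) in
def supported (s : Set ι) : Submodule 𝕜 (lp (fun _ : ι => 𝕜) p) where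
  carrier := {ψ | ∀ i ∉ s, ψ i = 0}
  add_mem' hψ hχ i hi := by simp [hψ i hi, hχ i hi]
  zero_mem' _ _ := rfl
  smul_mem' c ψ hψ i hi := by simp [hψ i hi]

theorem finiteDimensional_supported {s : Set ι} (hs : s.Finite) :
    FiniteDimensional 𝕜 (supported 𝕜 p s) := by
  have : Finite s := hs
  refine .of_injective
    { toFun := fun ψ i => (ψ : lp (fun _ : ι => 𝕜) p) i
      map_add' := fun _ _ => rfl
      map_smul' := fun _ _ => rfl : supported 𝕜 p s →ₗ[𝕜] s → 𝕜 } fun ψ χ h => ?_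
  ext i
  by_cases hi : i ∈ s
  · exact congrFun h ⟨i, hi⟩
  · rw [ψ.2 i hi, χ.2 i hi]

variable [DecidableEq ι]

theorem injective_of_map_single {F : ι → ι} {U : lp (fun _ : ι => 𝕜) p → lp (fun _ : ι => 𝕜) p}
    (hU_inj : Injective U) (hU : ∀ i, U (lp.single p i 1) = lp.single p (F i) 1) :
    Injective F := by
  intro i j h
  have : lp.single (E := fun _ : ι => 𝕜) p i 1 = lp.single p j 1 :=
    hU_inj (by rw [hU, hU, h])
  simpa [Pi.single_apply] using congrArg (fun ψ : lp (fun _ : ι => 𝕜) p => ψ i) this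

variable [Fact (1 ≤ p)]

theorem apply_eq_of_map_single (hp : p ≠ ⊤) (σ : ι ≃ ι)
    {U : lp (fun _ : ι => 𝕜) p →L[𝕜] lp (fun _ : ι => 𝕜) p}
    (hU : ∀ i, U (lp.single p i 1) = lp.single p (σ i) 1) (φ : lp (fun _ : ι => 𝕜) p) (j : ι) :
    U φ j = φ (σ.symm j) := by
  have hcoord : ∀ i, U (lp.single p i (φ i)) j = if σ i = j then φ i else 0 := by
    intro i
    rw [← mul_one (φ i), ← smul_eq_mul, lp.single_smul, map_smul, hU]
    simp [Pi.single_apply, eq_comm]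
  have hsum := ((lp.hasSum_single hp φ).mapL U).mapL (lp.evalCLM 𝕜 _ p j)
  refine hsum.unique ?_
  convert hasSum_single (σ.symm j) fun i hi => ?_ using 1
  · simp [lp.evalCLM, hcoord]
  · simp only [lp.evalCLM, LinearMap.mkContinuous_apply, lp.evalₗ_apply, hcoord]
    rw [if_neg (by rintro rfl; simp at hi)]

theorem range_sub_one_comp_mul_le_supported (hp : p ≠ ⊤) (σ : ι ≃ ι)
    {U M : lp (fun _ : ι => 𝕜) p →L[𝕜] lp (fun _ : ι => 𝕜) p} {g : ι → 𝕜}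
    (hU : ∀ i, U (lp.single p i 1) = lp.single p (σ i) 1) (hM : ∀ φ i, M φ i = g i * φ i) :
    LinearMap.range (((U - 1) ∘L M : _ →L[𝕜] _) : lp (fun _ : ι => 𝕜) p →ₗ[𝕜] _) ≤
      supported 𝕜 p (support g ∩ {i | σ i ≠ i} ∪ σ '' (support g ∩ {i | σ i ≠ i})) := by
  rintro _ ⟨φ, rfl⟩ j hj
  change (U (M φ) - M φ) j = 0
  rw [lp.coeFn_sub, Pi.sub_apply, apply_eq_of_map_single hp σ hU, hM, hM]
  rcases eq_or_ne (σ.symm j) j with hfix | hmoved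
  · rw [hfix, sub_self]
  · have hj_moved : σ j ≠ j := fun h => hmoved (σ.symm_apply_eq.2 h.symm)
    have h₁ : g j = 0 := by_contra fun h => hj (Or.inl ⟨h, hj_moved⟩)
    have h₂ : g (σ.symm j) = 0 := by_contra fun h =>
      hj (Or.inr ⟨σ.symm j, ⟨h, by simpa using hmoved.symm⟩, σ.apply_symm_apply j⟩)
    rw [h₁, h₂, zero_mul, zero_mul, sub_zero]

theorem range_mul_comp_sub_one_le_supported (hp : p ≠ ⊤) (σ : ι ≃ ι)
    {U M : lp (fun _ : ι => 𝕜) p →L[𝕜] lp (fun _ : ι => 𝕜) p} {g : ι → 𝕜}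
    (hU : ∀ i, U (lp.single p i 1) = lp.single p (σ i) 1) (hM : ∀ φ i, M φ i = g i * φ i) :
    LinearMap.range ((M ∘L (U - 1) : _ →L[𝕜] _) : lp (fun _ : ι => 𝕜) p →ₗ[𝕜] _) ≤
      supported 𝕜 p (support g ∩ {i | σ i ≠ i}) := by
  rintro _ ⟨φ, rfl⟩ j hj
  change M (U φ - φ) j = 0
  rw [hM, lp.coeFn_sub, Pi.sub_apply, apply_eq_of_map_single hp σ hU]
  rcases eq_or_ne (σ j) j with hfix | hmoved
  · rw [σ.symm_apply_eq.2 hfix.symm, sub_self, mul_zero]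
  · rw [by_contra fun h => hj ⟨h, hmoved⟩, zero_mul]

end lp

section FlowGraph

variable {X E : Type*} {s t : E → X}

theorem flow_surjective (α : ∀ x : X, {e : E // t e = x} ≃ {e : E // s e = x})
    {F : X × E → X × E}
    (hF₁ : ∀ (x : X) (e : E) (h : t e = x), F (x, e) = (t (α x ⟨e, h⟩ : E), (α x ⟨e, h⟩ : E)))
    (hF₂ : ∀ (x : X) (e : E), t e ≠ x → F (x, e) = (x, e)) :
    Surjective F := by
  rintro ⟨x, e⟩
  by_cases he : t e = x
  · subst he
    set e₀ := (α (s e)).symm ⟨e, rfl⟩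
    refine ⟨(s e, e₀), ?_⟩
    rw [hF₁ _ _ e₀.2, Subtype.coe_eta, Equiv.apply_symm_apply]
  · exact ⟨(x, e), hF₂ x e he⟩

theorem target_eq_of_flow_ne {F : X × E → X × E}
    (hF₂ : ∀ (x : X) (e : E), t e ≠ x → F (x, e) = (x, e)) {p : X × E} (hp : F p ≠ p) :
    t p.2 = p.1 :=
  by_contra fun h => hp (hF₂ p.1 p.2 h)

theorem finite_incomingPairs_of_finite (hloc : ∀ x : X, {e : E | t e = x}.Finite) {S : Set X}
    (hS : S.Finite) : {p : X × E | p.1 ∈ S ∧ t p.2 = p.1}.Finite :=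
  (hS.biUnion fun x _ => (Set.finite_singleton x).prod (hloc x)).subset
    fun _ ⟨hp, he⟩ => Set.mem_biUnion hp ⟨rfl, he⟩

end FlowGraph

theorem flow_unitary_sub_one_locally_compact_general {X E : Type*}
    [DecidableEq X] [DecidableEq E]
    (s t : E → X)
    (hloc : ∀ x : X, {e : E | t e = x}.Finite)
    (α : ∀ x : X, {e : E // t e = x} ≃ {e : E // s e = x})
    (F : X × E → X × E)
    (hF₁ : ∀ (x : X) (e : E) (h : t e = x),
      F (x, e) = (t ((α x ⟨e, h⟩ : E)), ((α x ⟨e, h⟩ : E))))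
    (hF₂ : ∀ (x : X) (e : E), t e ≠ x → F (x, e) = (x, e))
    (U : lp (fun _ : X × E => ℂ) 2 ≃ₗᵢ[ℂ] lp (fun _ : X × E => ℂ) 2)
    (hU : ∀ p : X × E, U (lp.single 2 p (1 : ℂ)) = lp.single 2 (F p) (1 : ℂ))
    (f : X → ℂ) (hf : (Function.support f).Finite)
    (M : lp (fun _ : X × E => ℂ) 2 →L[ℂ] lp (fun _ : X × E => ℂ) 2)
    (hM : ∀ (φ : lp (fun _ : X × E => ℂ) 2) (p : X × E), (M φ) p = f p.1 * φ p) :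
    (FiniteDimensional ℂ
        (LinearMap.range ((((U.toContinuousLinearEquiv :
            lp (fun _ : X × E => ℂ) 2 →L[ℂ] lp (fun _ : X × E => ℂ) 2) - 1) ∘L M) :
            lp (fun _ : X × E => ℂ) 2 →ₗ[ℂ] lp (fun _ : X × E => ℂ) 2)) ∧
      IsCompactOperator (((U.toContinuousLinearEquiv :
            lp (fun _ : X × E => ℂ) 2 →L[ℂ] lp (fun _ : X × E => ℂ) 2) - 1) ∘L M)) ∧
    (FiniteDimensional ℂ
        (LinearMap.range ((M ∘L ((U.toContinuousLinearEquiv :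
            lp (fun _ : X × E => ℂ) 2 →L[ℂ] lp (fun _ : X × E => ℂ) 2) - 1)) :
            lp (fun _ : X × E => ℂ) 2 →ₗ[ℂ] lp (fun _ : X × E => ℂ) 2)) ∧
      IsCompactOperator (M ∘L ((U.toContinuousLinearEquiv :
            lp (fun _ : X × E => ℂ) 2 →L[ℂ] lp (fun _ : X × E => ℂ) 2) - 1))) := by
  have hU' : ∀ p, (U.toContinuousLinearEquiv :
      lp (fun _ : X × E => ℂ) 2 →L[ℂ] lp (fun _ : X × E => ℂ) 2) (lp.single 2 p 1) =
        lp.single 2 (F p) 1 := hU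
  let σ : X × E ≃ X × E := .ofBijective F
    ⟨lp.injective_of_map_single U.injective hU, flow_surjective α hF₁ hF₂⟩
  have hK : (support (fun p : X × E => f p.1) ∩ {p | σ p ≠ p}).Finite :=
    (finite_incomingPairs_of_finite hloc hf).subset fun _ ⟨hp, hmoved⟩ =>
      ⟨hp, target_eq_of_flow_ne hF₂ hmoved⟩
  have hrange₁ := lp.range_sub_one_comp_mul_le_supported ENNReal.ofNat_ne_top σ hU' hM
  have hrange₂ := lp.range_mul_comp_sub_one_le_supported ENNReal.ofNat_ne_top σ hU' hM
  have := lp.finiteDimensional_supported (𝕜 := ℂ) (p := 2) (hK.union (hK.image σ))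
  have := lp.finiteDimensional_supported (𝕜 := ℂ) (p := 2) hK
  have := Submodule.finiteDimensional_of_le hrange₁
  have := Submodule.finiteDimensional_of_le hrange₂
  exact ⟨⟨inferInstance, ContinuousLinearMap.isCompactOperator_of_finiteDimensional_range _⟩,
    ⟨inferInstance, ContinuousLinearMap.isCompactOperator_of_finiteDimensional_range _⟩⟩

/-- Assume `I(x) = {e : t e = x}` is finite for every vertex `x`.
Then for every finitely supported `f : X → ℂ`, the operators `(U − 1) ∘ M_f` and
`M_f ∘ (U − 1)` on `ℓ²(X × E)` have finite rank (hence are compact), where `U` is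
the unitary implementing the flow map `F` and `M_f` is the bounded multiplication
operator `(M_f φ) (x, e) = f x * φ (x, e)`. -/
theorem flow_unitary_sub_one_locally_compact {X E : Type*} [Countable X] [Countable E]
    [DecidableEq X] [DecidableEq E]
    (s t : E → X)
    (hloc : ∀ x : X, {e : E | t e = x}.Finite)
    (α : ∀ x : X, {e : E // t e = x} ≃ {e : E // s e = x})
    (F : X × E → X × E)
    (hF₁ : ∀ (x : X) (e : E) (h : t e = x),
      F (x, e) = (t ((α x ⟨e, h⟩ : E)), ((α x ⟨e, h⟩ : E))))
    (hF₂ : ∀ (x : X) (e : E), t e ≠ x → F (x, e) = (x, e))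
    (U : lp (fun _ : X × E => ℂ) 2 ≃ₗᵢ[ℂ] lp (fun _ : X × E => ℂ) 2)
    (hU : ∀ p : X × E, U (lp.single 2 p (1 : ℂ)) = lp.single 2 (F p) (1 : ℂ))
    (f : X → ℂ) (hf : (Function.support f).Finite)
    (M : lp (fun _ : X × E => ℂ) 2 →L[ℂ] lp (fun _ : X × E => ℂ) 2)
    (hM : ∀ (φ : lp (fun _ : X × E => ℂ) 2) (p : X × E), (M φ) p = f p.1 * φ p) :
    (FiniteDimensional ℂ
        (LinearMap.range ((((U.toContinuousLinearEquiv :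
            lp (fun _ : X × E => ℂ) 2 →L[ℂ] lp (fun _ : X × E => ℂ) 2) - 1) ∘L M) :
            lp (fun _ : X × E => ℂ) 2 →ₗ[ℂ] lp (fun _ : X × E => ℂ) 2)) ∧
      IsCompactOperator (((U.toContinuousLinearEquiv :
            lp (fun _ : X × E => ℂ) 2 →L[ℂ] lp (fun _ : X × E => ℂ) 2) - 1) ∘L M)) ∧
    (FiniteDimensional ℂ
        (LinearMap.range ((M ∘L ((U.toContinuousLinearEquiv :
            lp (fun _ : X × E => ℂ) 2 →L[ℂ] lp (fun _ : X × E => ℂ) 2) - 1)) :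
            lp (fun _ : X × E => ℂ) 2 →ₗ[ℂ] lp (fun _ : X × E => ℂ) 2)) ∧
      IsCompactOperator (M ∘L ((U.toContinuousLinearEquiv :
            lp (fun _ : X × E => ℂ) 2 →L[ℂ] lp (fun _ : X × E => ℂ) 2) - 1))) :=
  flow_unitary_sub_one_locally_compact_general s t hloc α F hF₁ hF₂ U hU f hf M hM
end
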